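/- arXiv:1403.4410 — 12 statements merged into one kernel-verified Lean document; each statement's English description precedes it below -/
import Mathlib

section
/- Consider functions P, S, V, W : ℝ → ℝ that are differentiable on [0,∞) and satisfy for all t ≥ 0 the system P' = s(1 - P/L)P - aPS, S' = r(1 - S/K)S - bPS - λVS - βWS + ψV + φW, V' = λVS - ψV - μV - ePV, W' = βWS - φW - νW - fPW. If for all t ≥ 0 one has 0 ≤ P(t) ≤ L, 0 ≤ S(t) ≤ K, V(t) ≥ 0 and W(t) ≥ 0, then the trajectories are bounded: there exists M ∈ ℝ such that P(t) + S(t) + V(t) + W(t) ≤ M for all t ≥ 0. -/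
/-!
In the total prey population `N = S + V + W` the infection and recovery terms cancel, and since
logistic growth is at most `r S ≤ r K` while predation only removes prey,
`N' ≤ (r + c) K - c N` with `c = min μ ν`. Grönwall's inequality then keeps `N` below
`max (N 0) ((r + c) K / c)`, and `P ≤ L` by assumption.
-/

open Set Real

lemma gronwallBound_neg_le_max {δ c ε x : ℝ} (hc : 0 < c) (hx : 0 ≤ x) :
    gronwallBound δ (-c) ε x ≤ max δ (ε / c) := by
  rw [gronwallBound_of_K_ne_0 (neg_ne_zero.2 hc.ne')]
  set q := exp (-c * x)
  have hq : q ≤ 1 := exp_le_one_iff.2 (by nlinarith)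
  have hq' : 0 ≤ 1 - q := sub_nonneg.2 hq
  calc δ * q + ε / -c * (q - 1) = q * δ + (1 - q) * (ε / c) := by rw [div_neg]; ring
    _ ≤ q * max δ (ε / c) + (1 - q) * max δ (ε / c) := by
      gcongr
      · exact le_max_left _ _
      · exact le_max_right _ _
    _ = max δ (ε / c) := by ring

theorem le_max_of_hasDerivWithinAt_le_neg_mul_add {N N' : ℝ → ℝ} {c ε t₀ : ℝ} (hc : 0 < c)
    (hN : ∀ t ∈ Ici t₀, HasDerivWithinAt N (N' t) (Ici t₀) t)
    (hN' : ∀ t ∈ Ici t₀, N' t ≤ -c * N t + ε) :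
    ∀ t ∈ Ici t₀, N t ≤ max (N t₀) (ε / c) := by
  intro t ht
  have hcont : ContinuousOn N (Icc t₀ t) := fun x hx =>
    (hN x hx.1).continuousWithinAt.mono Icc_subset_Ici_self
  have hgronwall := le_gronwallBound_of_liminf_deriv_right_le hcont
    (fun x hx _ hr => ((hN x hx.1).mono (Ici_subset_Ici.2 hx.1)).liminf_right_slope_le hr)
    le_rfl (fun x hx => hN' x hx.1) t (right_mem_Icc.2 ht)
  exact hgronwall.trans (gronwallBound_neg_le_max hc (sub_nonneg.2 ht))

lemma prey_growth_rate_le {r K b mu nu e f c P S V W : ℝ} (hr : 0 ≤ r) (hb : 0 ≤ b)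
    (he : 0 ≤ e) (hf : 0 ≤ f) (hc : 0 ≤ c) (hcmu : c ≤ mu) (hcnu : c ≤ nu)
    (hP : 0 ≤ P) (hS : 0 ≤ S) (hSK : S ≤ K) (hV : 0 ≤ V) (hW : 0 ≤ W) :
    r * (1 - S / K) * S - b * P * S - mu * V - nu * W - e * P * V - f * P * W
      ≤ -c * (S + V + W) + (r + c) * K := by
  have hlogistic : r * (1 - S / K) * S ≤ r * S := by
    have : 0 ≤ r * (S / K) * S := by
      have := div_nonneg hS (hS.trans hSK)
      positivity
    linarith
  have hpredation : 0 ≤ b * P * S + e * P * V + f * P * W := by positivity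
  nlinarith [mul_le_mul_of_nonneg_left hSK (add_nonneg hr hc),
    mul_le_mul_of_nonneg_right hcmu hV, mul_le_mul_of_nonneg_right hcnu hW]

theorem boundedness_of_trajectories_general
    (L r K b lam beta psi phi mu nu e f : ℝ)
    (hr : 0 < r) (hb : 0 < b)
    (hmu : 0 < mu) (hnu : 0 < nu) (he : 0 < e) (hf : 0 < f)
    (P S V W : ℝ → ℝ)
    (hS : ∀ t ∈ Set.Ici (0 : ℝ),
      HasDerivWithinAt S
        (r * (1 - S t / K) * S t - b * P t * S t - lam * V t * S t - beta * W t * S t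
          + psi * V t + phi * W t) (Set.Ici 0) t)
    (hV : ∀ t ∈ Set.Ici (0 : ℝ),
      HasDerivWithinAt V (lam * V t * S t - psi * V t - mu * V t - e * P t * V t)
        (Set.Ici 0) t)
    (hW : ∀ t ∈ Set.Ici (0 : ℝ),
      HasDerivWithinAt W (beta * W t * S t - phi * W t - nu * W t - f * P t * W t)
        (Set.Ici 0) t)
    (hPbd : ∀ t ∈ Set.Ici (0 : ℝ), 0 ≤ P t ∧ P t ≤ L)
    (hSbd : ∀ t ∈ Set.Ici (0 : ℝ), 0 ≤ S t ∧ S t ≤ K)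
    (hVpos : ∀ t ∈ Set.Ici (0 : ℝ), 0 ≤ V t)
    (hWpos : ∀ t ∈ Set.Ici (0 : ℝ), 0 ≤ W t) :
    ∃ M : ℝ, ∀ t ∈ Set.Ici (0 : ℝ), P t + S t + V t + W t ≤ M := by
  set c := min mu nu
  have hc : 0 < c := lt_min hmu hnu
  have hprey : ∀ t ∈ Ici (0 : ℝ), HasDerivWithinAt (fun t => S t + V t + W t)
      (r * (1 - S t / K) * S t - b * P t * S t - mu * V t - nu * W t
        - e * P t * V t - f * P t * W t) (Ici 0) t := fun t ht =>
    (((hS t ht).add (hV t ht)).add (hW t ht)).congr_deriv (by ring)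
  have hprey_le := le_max_of_hasDerivWithinAt_le_neg_mul_add hc hprey fun t ht =>
    prey_growth_rate_le hr.le hb.le he.le hf.le hc.le (min_le_left _ _) (min_le_right _ _)
      (hPbd t ht).1 (hSbd t ht).1 (hSbd t ht).2 (hVpos t ht) (hWpos t ht)
  refine ⟨L + max (S 0 + V 0 + W 0) ((r + c) * K / c), fun t ht => ?_⟩
  linarith [hprey_le t ht, (hPbd t ht).2]

/-- Boundedness of trajectories of the two-strain ecoepidemic competition model:
if `P, S, V, W` solve the system on `[0, ∞)`, with `0 ≤ P ≤ L`, `0 ≤ S ≤ K`,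
`V ≥ 0`, `W ≥ 0` there, then the total population `P + S + V + W` is bounded. -/
theorem boundedness_of_trajectories
    (s L a r K b lam beta psi phi mu nu e f : ℝ)
    (hs : 0 < s) (hL : 0 < L) (ha : 0 < a) (hr : 0 < r) (hK : 0 < K) (hb : 0 < b)
    (hlam : 0 < lam) (hbeta : 0 < beta) (hpsi : 0 < psi) (hphi : 0 < phi)
    (hmu : 0 < mu) (hnu : 0 < nu) (he : 0 < e) (hf : 0 < f)
    (P S V W : ℝ → ℝ)
    (hP : ∀ t ∈ Set.Ici (0 : ℝ),
      HasDerivWithinAt P (s * (1 - P t / L) * P t - a * P t * S t) (Set.Ici 0) t)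
    (hS : ∀ t ∈ Set.Ici (0 : ℝ),
      HasDerivWithinAt S
        (r * (1 - S t / K) * S t - b * P t * S t - lam * V t * S t - beta * W t * S t
          + psi * V t + phi * W t) (Set.Ici 0) t)
    (hV : ∀ t ∈ Set.Ici (0 : ℝ),
      HasDerivWithinAt V (lam * V t * S t - psi * V t - mu * V t - e * P t * V t)
        (Set.Ici 0) t)
    (hW : ∀ t ∈ Set.Ici (0 : ℝ),
      HasDerivWithinAt W (beta * W t * S t - phi * W t - nu * W t - f * P t * W t)
        (Set.Ici 0) t)
    (hPbd : ∀ t ∈ Set.Ici (0 : ℝ), 0 ≤ P t ∧ P t ≤ L)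
    (hSbd : ∀ t ∈ Set.Ici (0 : ℝ), 0 ≤ S t ∧ S t ≤ K)
    (hVpos : ∀ t ∈ Set.Ici (0 : ℝ), 0 ≤ V t)
    (hWpos : ∀ t ∈ Set.Ici (0 : ℝ), 0 ≤ W t) :
    ∃ M : ℝ, ∀ t ∈ Set.Ici (0 : ℝ), P t + S t + V t + W t ≤ M :=
  boundedness_of_trajectories_general L r K b lam beta psi phi mu nu e f hr hb hmu hnu he hf P S V W
    hS hV hW hPbd hSbd hVpos hWpos
end

section
/- Let s, L, a be positive real numbers, let S : ℝ → ℝ satisfy S(t) ≥ 0 for all t ≥ 0, and let P : ℝ → ℝ be differentiable on [0,∞) with P(0) ≥ 0 and P'(t) = s(1 - P(t)/L)P(t) - a P(t) S(t) for all t ≥ 0. Then limsup_{t→∞} P(t) ≤ L. -/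
/-!
Above the level `L + η` the logistic term alone makes `P` decrease at rate at least `s η`, and the
competition term `a P S` only helps. A function decreasing at a uniform rate whenever it exceeds
`M + η` stays below the barrier `M + η + K e^{-μ t}` once `K μ` is smaller than that rate, and the
barrier tends to `M + η`.
-/

open Set Filter Real

/-- The sign condition is needed because `limsup` of a function tending to `-∞` is the junk
value `sInf univ = 0` in `ℝ`. -/
lemma Real.limsup_le_of_eventually_le {α : Type*} {l : Filter α} {u : α → ℝ} {M : ℝ}
    (hM : 0 ≤ M) (h : ∀ᶠ x in l, u x ≤ M) : limsup u l ≤ M := by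
  by_cases hcob : l.IsCoboundedUnder (· ≤ ·) u
  · exact limsup_le_of_le hcob h
  · rw [limsup, limsSup, Real.sInf_of_not_bddBelow (s := {a | ∀ᶠ n in map u l, n ≤ a}) hcob]
    exact hM

section Barrier

variable {f f' : ℝ → ℝ} {M δ : ℝ}

lemma le_add_mul_exp_of_deriv_le_neg {K μ : ℝ}
    (hf : ∀ t ∈ Ici (0 : ℝ), HasDerivWithinAt f (f' t) (Ici 0) t)
    (hdec : ∀ t ∈ Ici (0 : ℝ), M < f t → f' t ≤ -δ)
    (hK : 0 < K) (hμ : 0 ≤ μ) (hKμ : K * μ < δ) (h0 : f 0 ≤ M + K) :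
    ∀ t ∈ Ici (0 : ℝ), f t ≤ M + K * exp (-μ * t) := by
  intro t ht
  have hB : ∀ x, HasDerivAt (fun x => M + K * exp (-μ * x)) (K * (exp (-μ * x) * -μ)) x :=
    fun x => (((hasDerivAt_id x).const_mul (-μ)).exp.const_mul K).const_add M |>.congr_deriv
      (by simp)
  refine image_le_of_deriv_right_lt_deriv_boundary
    (fun x hx => (hf x hx.1).continuousWithinAt.mono fun y hy => hy.1)
    (fun x hx => (hf x hx.1).mono (Ici_subset_Ici.mpr hx.1)) (by simpa using h0) hB ?_
    ⟨ht, le_rfl⟩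
  intro x hx hcontact
  have hexp_le : exp (-μ * x) ≤ 1 := exp_le_one_iff.mpr (by nlinarith [hx.1])
  have hexp_pos : 0 < exp (-μ * x) := exp_pos _
  have habove : M < f x := by rw [hcontact]; nlinarith
  calc f' x ≤ -δ := hdec x hx.1 habove
    _ < -(K * μ) := by linarith
    _ ≤ K * (exp (-μ * x) * -μ) := by nlinarith [mul_nonneg hK.le hμ]

lemma eventually_le_add_of_deriv_le_neg (hδ : 0 < δ)
    (hf : ∀ t ∈ Ici (0 : ℝ), HasDerivWithinAt f (f' t) (Ici 0) t)
    (hdec : ∀ t ∈ Ici (0 : ℝ), M < f t → f' t ≤ -δ) {η : ℝ} (hη : 0 < η) :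
    ∀ᶠ t in atTop, f t ≤ M + η := by
  set K := |f 0 - M| + 1
  have hK : 0 < K := by positivity
  set μ := δ / (2 * K)
  have hKμ : K * μ = δ / 2 := by simp only [μ]; field_simp
  have hbarrier := le_add_mul_exp_of_deriv_le_neg (μ := μ) hf hdec hK (by positivity)
    (by linarith) (by linarith [le_abs_self (f 0 - M)])
  have hdecay : Tendsto (fun t => K * exp (-μ * t)) atTop (nhds 0) := by
    simpa using (tendsto_exp_atBot.comp
      (tendsto_id.const_mul_atTop_of_neg (neg_lt_zero.mpr (by positivity)))).const_mul K
  filter_upwards [hdecay.eventually (eventually_le_nhds hη), eventually_ge_atTop 0]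
    with t hsmall ht
  linarith [hbarrier t ht]

lemma limsup_le_of_deriv_le_neg (hM : 0 ≤ M)
    (hf : ∀ t ∈ Ici (0 : ℝ), HasDerivWithinAt f (f' t) (Ici 0) t)
    (hdec : ∀ η > 0, ∃ δ > 0, ∀ t ∈ Ici (0 : ℝ), M + η < f t → f' t ≤ -δ) :
    limsup f atTop ≤ M := by
  refine le_of_forall_pos_le_add fun η hη => ?_
  obtain ⟨δ, hδ, hdecη⟩ := hdec (η / 2) (half_pos hη)
  refine Real.limsup_le_of_eventually_le (by positivity) ?_
  filter_upwards [eventually_le_add_of_deriv_le_neg hδ hf hdecη (half_pos hη)] with t ht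
  linarith

end Barrier

lemma logistic_sub_competition_le_neg {s L a P S η : ℝ} (hs : 0 < s) (hL : 0 < L) (ha : 0 ≤ a)
    (hS : 0 ≤ S) (hη : 0 ≤ η) (hP : L + η < P) :
    s * (1 - P / L) * P - a * P * S ≤ -(s * η) := by
  have hlogistic : s * (1 - P / L) * P = -(s * ((P - L) * (P / L))) := by
    field_simp
    ring
  have hratio : 1 ≤ P / L := by rw [le_div_iff₀ hL]; linarith
  have hgrowth : η ≤ (P - L) * (P / L) := by nlinarith
  have hcompetition : 0 ≤ a * P * S := by
    have : 0 ≤ P := by linarith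
    positivity
  nlinarith

theorem limsup_P_le_carrying_capacity_general
    (s L a : ℝ) (hs : 0 < s) (hL : 0 < L) (ha : 0 < a)
    (S : ℝ → ℝ) (hS : ∀ t ∈ Set.Ici (0 : ℝ), 0 ≤ S t)
    (P : ℝ → ℝ)
    (hP : ∀ t ∈ Set.Ici (0 : ℝ),
      HasDerivWithinAt P (s * (1 - P t / L) * P t - a * P t * S t) (Set.Ici 0) t) :
    Filter.limsup P Filter.atTop ≤ L :=
  limsup_le_of_deriv_le_neg (f' := fun t => s * (1 - P t / L) * P t - a * P t * S t) hL.le hP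
    fun η hη => ⟨s * η, mul_pos hs hη, fun t ht hPt =>
      logistic_sub_competition_le_neg hs hL ha.le (hS t ht) hη.le hPt⟩

/-- For the first population of the two-strain ecoepidemic competition model,
governed by `P' = s (1 - P/L) P - a P S` with `S ≥ 0`, `P 0 ≥ 0`, we have
`limsup_{t → ∞} P t ≤ L`. -/
theorem limsup_P_le_carrying_capacity
    (s L a : ℝ) (hs : 0 < s) (hL : 0 < L) (ha : 0 < a)
    (S : ℝ → ℝ) (hS : ∀ t ∈ Set.Ici (0 : ℝ), 0 ≤ S t)
    (P : ℝ → ℝ) (hP0 : 0 ≤ P 0)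
    (hP : ∀ t ∈ Set.Ici (0 : ℝ),
      HasDerivWithinAt P (s * (1 - P t / L) * P t - a * P t * S t) (Set.Ici 0) t) :
    Filter.limsup P Filter.atTop ≤ L :=
  limsup_P_le_carrying_capacity_general s L a hs hL ha S hS P hP
end

section
/- Let all parameters s, L, a, r, K, b, λ, β, ψ, φ, μ, ν, e, f be positive reals. The characteristic polynomial of the Jacobian matrix J evaluated at the equilibrium E₁ = (L, 0, 0, 0) equals (X + s)(X - (r - bL))(X + μ + ψ + eL)(X + ν + φ + fL); consequently all four eigenvalues of J at E₁ are negative if and only if L > r/b. -/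
/-!
At `E₁ = (L, 0, 0, 0)` every entry of the Jacobian below the diagonal carries a factor `S`, `V`
or `W`, so the Jacobian is upper triangular and its eigenvalues are its diagonal entries
`-s`, `r - bL`, `-(μ + ψ + eL)`, `-(ν + φ + fL)`. All but the second are negative for positive
parameters, so stability is decided by the sign of `r - bL`.
-/

open Polynomial

/-- The Jacobian matrix of the two-strain ecoepidemic competition model at `(P, S, V, W)`. -/
noncomputable def ecoJac (s L a r K b lam beta psi phi mu nu e f P S V W : ℝ) :
    Matrix (Fin 4) (Fin 4) ℝ :=
  !![s - 2*s*P/L - a*S, -(a*P), 0, 0;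
     -(b*S), r - 2*r*S/K - lam*V - beta*W - b*P, -(lam*S) + psi, -(beta*S) + phi;
     -(e*V), lam*V, lam*S - mu - psi - e*P, 0;
     -(f*W), beta*W, 0, beta*S - nu - phi - f*P]

theorem Polynomial.forall_isRoot_prod_X_sub_C_imp_iff {R ι : Type*} [CommRing R] [IsDomain R]
    (s : Finset ι) (c : ι → R) (q : R → Prop) :
    (∀ x, (∏ i ∈ s, (X - C (c i))).IsRoot x → q x) ↔ ∀ i ∈ s, q (c i) := by
  simp only [IsRoot.def, eval_prod, eval_sub, eval_X, eval_C, Finset.prod_eq_zero_iff,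
    sub_eq_zero]
  constructor
  · intro h i hi
    exact h (c i) ⟨i, hi, rfl⟩
  · rintro h x ⟨i, hi, rfl⟩
    exact h i hi

section Equilibrium

variable (s L a r K b lam beta psi phi mu nu e f : ℝ)

theorem ecoJac_E1_isUpperTriangular :
    (ecoJac s L a r K b lam beta psi phi mu nu e f L 0 0 0).IsUpperTriangular := by
  intro i j hji
  fin_cases i <;> fin_cases j <;> simp_all [ecoJac]

theorem ecoJac_E1_diag (hL : L ≠ 0) :
    (fun i ↦ ecoJac s L a r K b lam beta psi phi mu nu e f L 0 0 0 i i)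
      = ![-s, r - b * L, -(mu + psi + e * L), -(nu + phi + f * L)] := by
  ext i
  fin_cases i <;> simp [ecoJac] <;> field_simp <;> ring

theorem charpoly_ecoJac_E1 (hL : L ≠ 0) :
    (ecoJac s L a r K b lam beta psi phi mu nu e f L 0 0 0).charpoly
      = ∏ i, (X - C (![-s, r - b * L, -(mu + psi + e * L), -(nu + phi + f * L)] i)) := by
  rw [Matrix.charpoly_of_isUpperTriangular _ (ecoJac_E1_isUpperTriangular ..),
    ← ecoJac_E1_diag s L a r K b lam beta psi phi mu nu e f hL]

end Equilibrium

theorem E1_charpoly_and_stability_general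
    (s L a r K b lam beta psi phi mu nu e f : ℝ)
    (hs : 0 < s) (hL : 0 < L) (hb : 0 < b)
    (hpsi : 0 < psi) (hphi : 0 < phi)
    (hmu : 0 < mu) (hnu : 0 < nu) (he : 0 < e) (hf : 0 < f) :
    (ecoJac s L a r K b lam beta psi phi mu nu e f L 0 0 0).charpoly
        = (X + C s) * (X - C (r - b * L)) * (X + C (mu + psi + e * L))
            * (X + C (nu + phi + f * L)) ∧
    ((∀ x : ℝ,
        (ecoJac s L a r K b lam beta psi phi mu nu e f L 0 0 0).charpoly.IsRoot x →
          x < 0) ↔ L > r / b) := by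
  rw [charpoly_ecoJac_E1 s L a r K b lam beta psi phi mu nu e f hL.ne',
    forall_isRoot_prod_X_sub_C_imp_iff]
  constructor
  · simp only [Fin.prod_univ_four, Matrix.cons_val, C_neg, sub_neg_eq_add]
  · have hbL : r - b * L < 0 ↔ L > r / b := by
      rw [gt_iff_lt, div_lt_iff₀ hb, sub_neg, mul_comm]
    have hdecay : -s < 0 ∧ -(mu + psi + e * L) < 0 ∧ -(nu + phi + f * L) < 0 :=
      ⟨neg_neg_of_pos hs, neg_neg_of_pos (by positivity), neg_neg_of_pos (by positivity)⟩
    simp only [Finset.mem_univ, forall_const, Fin.forall_fin_succ, Matrix.cons_val_zero,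
      Matrix.cons_val_succ, IsEmpty.forall_iff, and_true, hdecay, true_and, hbL]

/-- At the equilibrium `E₁ = (L,0,0,0)` the characteristic polynomial of the Jacobian is
`(X + s)(X - (r - bL))(X + μ + ψ + eL)(X + ν + φ + fL)`; consequently all four
eigenvalues are negative iff `L > r/b`. -/
theorem E1_charpoly_and_stability
    (s L a r K b lam beta psi phi mu nu e f : ℝ)
    (hs : 0 < s) (hL : 0 < L) (ha : 0 < a) (hr : 0 < r) (hK : 0 < K) (hb : 0 < b)
    (hlam : 0 < lam) (hbeta : 0 < beta) (hpsi : 0 < psi) (hphi : 0 < phi)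
    (hmu : 0 < mu) (hnu : 0 < nu) (he : 0 < e) (hf : 0 < f) :
    (ecoJac s L a r K b lam beta psi phi mu nu e f L 0 0 0).charpoly
        = (X + C s) * (X - C (r - b * L)) * (X + C (mu + psi + e * L))
            * (X + C (nu + phi + f * L)) ∧
    ((∀ x : ℝ,
        (ecoJac s L a r K b lam beta psi phi mu nu e f L 0 0 0).charpoly.IsRoot x →
          x < 0) ↔ L > r / b) :=
  E1_charpoly_and_stability_general s L a r K b lam beta psi phi mu nu e f hs hL hb hpsi hphi hmu
    hnu he hf
end

section
/- Let all parameters s, L, a, r, K, b, λ, β, ψ, φ, μ, ν, e, f be positive reals. The characteristic polynomial of the Jacobian matrix J evaluated at the equilibrium E₂ = (0, K, 0, 0) equals (X + r)(X - (s - aK))(X - (λK - ψ - μ))(X - (βK - φ - ν)); consequently all four eigenvalues of J at E₂ are negative if and only if K > s/a, K < (ψ+μ)/λ and K < (φ+ν)/β. -/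
open Polynomial

namespace Matrix

variable {n R : Type*} [Fintype n] [DecidableEq n] [CommRing R]

theorem charpoly_of_blockTriangular_of_injective {α : Type*} [LinearOrder α] {b : n → α}
    {M : Matrix n n R} (hM : M.BlockTriangular b) (hb : Function.Injective b) :
    M.charpoly = ∏ i, (X - C (M i i)) :=
  letI : LinearOrder n := LinearOrder.lift' b hb
  charpoly_of_isUpperTriangular M hM

end Matrix

namespace Polynomial

theorem forall_isRoot_prod_X_sub_C_iff {R ι : Type*} [CommRing R] [IsDomain R] (s : Finset ι)
    (d : ι → R) (p : R → Prop) :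
    (∀ x, (∏ i ∈ s, (X - C (d i))).IsRoot x → p x) ↔ ∀ i ∈ s, p (d i) := by
  simp only [isRoot_prod, root_X_sub_C]
  exact ⟨fun h i hi => h _ ⟨i, hi, rfl⟩, fun h _ ⟨i, hi, hx⟩ => hx ▸ h i hi⟩

end Polynomial

section E2

variable {s L a r K b lam beta psi phi mu nu e f : ℝ}

theorem ecoJac_E2_blockTriangular :
    (ecoJac s L a r K b lam beta psi phi mu nu e f 0 K 0 0).BlockTriangular ![1, 0, 2, 3] := by
  intro i j hij
  fin_cases i <;> fin_cases j <;> simp_all [ecoJac]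

theorem ecoJac_E2_diag (hK : K ≠ 0) (i : Fin 4) :
    ecoJac s L a r K b lam beta psi phi mu nu e f 0 K 0 0 i i
      = ![s - a * K, -r, lam * K - psi - mu, beta * K - phi - nu] i := by
  fin_cases i <;> simp [ecoJac, hK] <;> ring

theorem ecoJac_E2_charpoly (hK : K ≠ 0) :
    (ecoJac s L a r K b lam beta psi phi mu nu e f 0 K 0 0).charpoly
      = ∏ i, (X - C (![s - a * K, -r, lam * K - psi - mu, beta * K - phi - nu] i)) := by
  rw [Matrix.charpoly_of_blockTriangular_of_injective ecoJac_E2_blockTriangular (by decide)]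
  simp only [ecoJac_E2_diag hK]

end E2

theorem E2_charpoly_and_stability_general
    (s L a r K b lam beta psi phi mu nu e f : ℝ)
    (ha : 0 < a) (hr : 0 < r) (hK : 0 < K)
    (hlam : 0 < lam) (hbeta : 0 < beta) :
    (ecoJac s L a r K b lam beta psi phi mu nu e f 0 K 0 0).charpoly
        = (X + C r) * (X - C (s - a * K)) * (X - C (lam * K - psi - mu))
            * (X - C (beta * K - phi - nu)) ∧
    ((∀ x : ℝ,
        (ecoJac s L a r K b lam beta psi phi mu nu e f 0 K 0 0).charpoly.IsRoot x →
          x < 0) ↔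
      (K > s / a ∧ K < (psi + mu) / lam ∧ K < (phi + nu) / beta)) := by
  rw [ecoJac_E2_charpoly hK.ne']
  constructor
  · simp only [Fin.prod_univ_four, Matrix.cons_val, map_neg, sub_neg_eq_add]
    ring
  · rw [Polynomial.forall_isRoot_prod_X_sub_C_iff, gt_iff_lt, div_lt_iff₀ ha, lt_div_iff₀ hlam,
      lt_div_iff₀ hbeta]
    simp only [Finset.mem_univ, forall_const, Fin.forall_fin_succ, IsEmpty.forall_iff,
      Matrix.cons_val_zero, Matrix.cons_val_succ, neg_lt_zero, hr, true_and, and_true]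
    constructor <;> rintro ⟨h₁, h₂, h₃⟩ <;> refine ⟨?_, ?_, ?_⟩ <;> linarith

/-- At the equilibrium `E₂ = (0,K,0,0)` the characteristic polynomial of the Jacobian is
`(X + r)(X - (s - aK))(X - (λK - ψ - μ))(X - (βK - φ - ν))`; consequently all four
eigenvalues are negative iff `K > s/a`, `K < (ψ+μ)/λ` and `K < (φ+ν)/β`. -/
theorem E2_charpoly_and_stability
    (s L a r K b lam beta psi phi mu nu e f : ℝ)
    (hs : 0 < s) (hL : 0 < L) (ha : 0 < a) (hr : 0 < r) (hK : 0 < K) (hb : 0 < b)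
    (hlam : 0 < lam) (hbeta : 0 < beta) (hpsi : 0 < psi) (hphi : 0 < phi)
    (hmu : 0 < mu) (hnu : 0 < nu) (he : 0 < e) (hf : 0 < f) :
    (ecoJac s L a r K b lam beta psi phi mu nu e f 0 K 0 0).charpoly
        = (X + C r) * (X - C (s - a * K)) * (X - C (lam * K - psi - mu))
            * (X - C (beta * K - phi - nu)) ∧
    ((∀ x : ℝ,
        (ecoJac s L a r K b lam beta psi phi mu nu e f 0 K 0 0).charpoly.IsRoot x →
          x < 0) ↔
      (K > s / a ∧ K < (psi + mu) / lam ∧ K < (phi + nu) / beta)) :=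
  E2_charpoly_and_stability_general s L a r K b lam beta psi phi mu nu e f ha hr hK hlam hbeta
end

section
/- Let r, K, λ, ψ, μ be positive reals and set S₄ = (ψ + μ)/λ and V₄ = r(μ + ψ)(Kλ - μ - ψ)/(Kλ²μ). Then (0, S₄, V₄, 0) is an equilibrium of the two-strain ecoepidemic competition model: r(1 - S₄/K)S₄ - λV₄S₄ + ψV₄ = 0 and λV₄S₄ - ψV₄ - μV₄ = 0. -/
/-- `E₄ = (0, S₄, V₄, 0)` with `S₄ = (ψ+μ)/λ` and `V₄ = r(μ+ψ)(Kλ-μ-ψ)/(Kλ²μ)` is an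
equilibrium of the two-strain ecoepidemic competition model. -/
theorem E4_is_equilibrium
    (r K lam psi mu : ℝ)
    (hr : 0 < r) (hK : 0 < K) (hlam : 0 < lam) (hpsi : 0 < psi) (hmu : 0 < mu)
    (S₄ V₄ : ℝ)
    (hS₄ : S₄ = (psi + mu) / lam)
    (hV₄ : V₄ = r * (mu + psi) * (K * lam - mu - psi) / (K * lam ^ 2 * mu)) :
    r * (1 - S₄ / K) * S₄ - lam * V₄ * S₄ + psi * V₄ = 0 ∧
    lam * V₄ * S₄ - psi * V₄ - mu * V₄ = 0 := by
  subst hS₄ hV₄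
  constructor <;>
  · field_simp
    ring
end

section
/- Let all parameters s, L, a, r, K, b, λ, β, ψ, φ, μ, ν, e, f be positive reals with Kλ ≥ ψ + μ, and set A = (ψ + μ)/λ, V₄ = r(μ+ψ)(Kλ-μ-ψ)/(Kλ²μ). Then s - aA and βA - ν - φ are roots of the characteristic polynomial of the Jacobian matrix J evaluated at E₄ = (0, A, V₄, 0), i.e. they are eigenvalues of J at the first-strain endemic equilibrium. -/
open Polynomial

/-- At the first-strain endemic equilibrium `E₄ = (0, A, V₄, 0)`, with `A = (ψ+μ)/λ`
and `V₄ = r(μ+ψ)(Kλ-μ-ψ)/(Kλ²μ)`, the quantities `s - aA` and `βA - ν - φ` are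
eigenvalues of the Jacobian, i.e. roots of its characteristic polynomial. -/
theorem E4_two_explicit_eigenvalues
    (s L a r K b lam beta psi phi mu nu e f : ℝ)
    (hs : 0 < s) (hL : 0 < L) (ha : 0 < a) (hr : 0 < r) (hK : 0 < K) (hb : 0 < b)
    (hlam : 0 < lam) (hbeta : 0 < beta) (hpsi : 0 < psi) (hphi : 0 < phi)
    (hmu : 0 < mu) (hnu : 0 < nu) (he : 0 < e) (hf : 0 < f)
    (hfeas : K * lam ≥ psi + mu)
    (A V₄ : ℝ)
    (hA : A = (psi + mu) / lam)
    (hV₄ : V₄ = r * (mu + psi) * (K * lam - mu - psi) / (K * lam ^ 2 * mu)) :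
    (ecoJac s L a r K b lam beta psi phi mu nu e f 0 A V₄ 0).charpoly.IsRoot
        (s - a * A) ∧
    (ecoJac s L a r K b lam beta psi phi mu nu e f 0 A V₄ 0).charpoly.IsRoot
        (beta * A - nu - phi) := by
  set M := ecoJac s L a r K b lam beta psi phi mu nu e f 0 A V₄ 0 with hM
  have key : ∀ x : ℝ, eval x M.charpoly = ((M.charmatrix).map (eval x)).det := by
    intro x
    rw [Matrix.charpoly, ← Polynomial.coe_evalRingHom, RingHom.map_det]
    rfl
  constructor
  · rw [Polynomial.IsRoot, key]
    apply Matrix.det_eq_zero_of_row_eq_zero 0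
    intro j
    fin_cases j <;>
      simp [hM, ecoJac, Matrix.charmatrix_apply, Matrix.map_apply, Matrix.one_apply] <;> ring
  · rw [Polynomial.IsRoot, key]
    apply Matrix.det_eq_zero_of_row_eq_zero 3
    intro j
    fin_cases j <;>
      simp [hM, ecoJac, Matrix.charmatrix_apply, Matrix.map_apply, Matrix.one_apply] <;> ring
end

section
/- Let r, K, β, φ, ν be positive reals and set S₅ = (φ + ν)/β and W₅ = r(φ + ν)(Kβ - φ - ν)/(Kβ²ν). Then (0, S₅, 0, W₅) is an equilibrium of the two-strain ecoepidemic competition model: r(1 - S₅/K)S₅ - βW₅S₅ + φW₅ = 0 and βW₅S₅ - φW₅ - νW₅ = 0. -/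
/-- `E₅ = (0, S₅, 0, W₅)` with `S₅ = (φ+ν)/β` and `W₅ = r(φ+ν)(Kβ-φ-ν)/(Kβ²ν)` is an
equilibrium of the two-strain ecoepidemic competition model. -/
theorem E5_is_equilibrium
    (r K beta phi nu : ℝ)
    (hr : 0 < r) (hK : 0 < K) (hbeta : 0 < beta) (hphi : 0 < phi) (hnu : 0 < nu)
    (S₅ W₅ : ℝ)
    (hS₅ : S₅ = (phi + nu) / beta)
    (hW₅ : W₅ = r * (phi + nu) * (K * beta - phi - nu) / (K * beta ^ 2 * nu)) :
    r * (1 - S₅ / K) * S₅ - beta * W₅ * S₅ + phi * W₅ = 0 ∧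
    beta * W₅ * S₅ - phi * W₅ - nu * W₅ = 0 := by
  subst hS₅ hW₅
  constructor <;> field_simp <;> ring
end

section
/- Let s, λ, e, L, μ, ψ be positive real numbers, and set G = λs/(μ + ψ) and N = sλ(eL + μ)/(eLψ). Then G < N. Consequently, the second alternative feasibility case for the equilibrium E₆ (requiring N < a < M together with a < G) is impossible. -/
/-- With `G = λs/(μ+ψ)` and `N = sλ(eL+μ)/(eLψ)` one has `G < N`; consequently the
second alternative feasibility case for the equilibrium `E₆`, requiring `N < a < M`
together with `a < G`, is impossible. -/
theorem E6_second_case_impossible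
    (s lam e L mu psi : ℝ)
    (hs : 0 < s) (hlam : 0 < lam) (he : 0 < e) (hL : 0 < L)
    (hmu : 0 < mu) (hpsi : 0 < psi)
    (G N : ℝ)
    (hG : G = lam * s / (mu + psi))
    (hN : N = s * lam * (e * L + mu) / (e * L * psi)) :
    G < N ∧ ∀ a M : ℝ, ¬ (N < a ∧ a < M ∧ a < G) := by
  have hGN : G < N := by
    rw [hG, hN, div_lt_div_iff₀ (by positivity) (by positivity)]
    nlinarith [mul_pos hs hlam, mul_pos he hL, mul_pos hmu hpsi,
      mul_pos (mul_pos hs hlam) hmu, mul_pos (mul_pos he hL) hmu,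
      mul_pos (mul_pos (mul_pos hs hlam) hmu) (add_pos hmu hpsi)]
  exact ⟨hGN, fun a M ⟨h1, _, h3⟩ => absurd (h1.trans h3) (not_lt.2 hGN.le)⟩
end

section
/- Let s, L, r, K, b, λ, e, ψ, μ be positive real numbers, and set M = s(eLr + bLKλ + rψ - rKλ + rμ)/(LK(er + bψ + bμ)) and G = λs/(μ + ψ). Then M < G if and only if Kλ > μ + ψ, i.e. K > (μ + ψ)/λ. -/
/-- With `M = s(eLr + bLKλ + rψ - rKλ + rμ)/(LK(er + bψ + bμ))` and `G = λs/(μ+ψ)`,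
one has `M < G` if and only if `Kλ > μ + ψ`, i.e. `K > (μ+ψ)/λ`. -/
theorem E6_M_lt_G_iff
    (s L r K b lam e psi mu : ℝ)
    (hs : 0 < s) (hL : 0 < L) (hr : 0 < r) (hK : 0 < K) (hb : 0 < b)
    (hlam : 0 < lam) (he : 0 < e) (hpsi : 0 < psi) (hmu : 0 < mu)
    (M G : ℝ)
    (hM : M = s * (e * L * r + b * L * K * lam + r * psi - r * K * lam + r * mu)
        / (L * K * (e * r + b * psi + b * mu)))
    (hG : G = lam * s / (mu + psi)) :
    (M < G ↔ K * lam > mu + psi) ∧ (M < G ↔ K > (mu + psi) / lam) := by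
  have hden1 : 0 < L * K * (e * r + b * psi + b * mu) := by positivity
  have hden2 : 0 < mu + psi := by positivity
  have key : M < G ↔ K * lam > mu + psi := by
    rw [hM, hG, div_lt_div_iff₀ hden1 hden2]
    constructor
    · intro h
      by_contra hc
      push_neg at hc
      nlinarith [mul_nonneg (mul_nonneg hs.le (sub_nonneg.mpr hc))
        (by positivity : (0:ℝ) ≤ e * L * r + r * (mu + psi))]
    · intro h
      nlinarith [mul_pos (mul_pos hs (sub_pos.mpr h))
        (by positivity : (0:ℝ) < e * L * r + r * (mu + psi))]
  refine ⟨key, key.trans ?_⟩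
  rw [gt_iff_lt, gt_iff_lt, div_lt_iff₀ hlam]
end

section
/- Let s, L, a, r, K, b, λ, ψ, μ, e be positive reals. Define E = rLKea - eLrs - LKbλs + bLKaψ + bLKaμ - rsψ + rKλs - rsμ and F = sλeL + sλμ - ψeLa, and assume λs + eLa ≠ 0 and F ≠ 0. Set P₆ = -L(-λs + aμ + aψ)/(λs + eLa), S₆ = s(μ + ψ + eL)/(λs + eLa), V₆ = s(μ + ψ + eL)E/(K(λs + eLa)F). Then (P₆, S₆, V₆, 0) is an equilibrium of the two-strain ecoepidemic competition model: s(1 - P₆/L)P₆ - aP₆S₆ = 0, r(1 - S₆/K)S₆ - bP₆S₆ - λV₆S₆ + ψV₆ = 0, and λV₆S₆ - ψV₆ - μV₆ - eP₆V₆ = 0. -/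
/-!
With `D = λs + eLa`, the formulas say `P₆ D = -L(-λs + aμ + aψ)` and `S₆ D = s(μ + ψ + eL)`:
by Cramer's rule `(P₆, S₆)` solves the linear system of the two nullclines
`s (L - P) = a L S` and `λ S = ψ + μ + e P`, so the `P`- and `V`-equations vanish.
The `S`-equation is linear in `V`, with `(λ S₆ - ψ) D = F` as coefficient of `-V` and
`r (1 - S₆/K) - b P₆ = E/(K D)`, and `V₆` is its solution.
-/

namespace E6

variable {s L a r K b lam psi mu e E F P S V : ℝ}

lemma predator_nullcline (hL : L ≠ 0) (hden : lam * s + e * L * a ≠ 0)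
    (hP : P = -(L * (-(lam * s) + a * mu + a * psi)) / (lam * s + e * L * a))
    (hS : S = s * (mu + psi + e * L) / (lam * s + e * L * a)) :
    s * (1 - P / L) = a * S := by
  have hPD := (eq_div_iff hden).mp hP
  have hSD := (eq_div_iff hden).mp hS
  have h : (s * (L - P) - a * L * S) * (lam * s + e * L * a) = 0 := by
    linear_combination (-s) * hPD - a * L * hSD
  have hlin := (mul_eq_zero.mp h).resolve_right hden
  field_simp
  linear_combination hlin

lemma infected_nullcline (hden : lam * s + e * L * a ≠ 0)
    (hP : P = -(L * (-(lam * s) + a * mu + a * psi)) / (lam * s + e * L * a))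
    (hS : S = s * (mu + psi + e * L) / (lam * s + e * L * a)) :
    lam * S - psi - mu - e * P = 0 := by
  have hPD := (eq_div_iff hden).mp hP
  have hSD := (eq_div_iff hden).mp hS
  have h : (lam * S - psi - mu - e * P) * (lam * s + e * L * a) = 0 := by
    linear_combination lam * hSD - e * hPD
  exact (mul_eq_zero.mp h).resolve_right hden

lemma lam_mul_sub_psi_mul_den (hden : lam * s + e * L * a ≠ 0)
    (hF : F = s * lam * e * L + s * lam * mu - psi * e * L * a)
    (hS : S = s * (mu + psi + e * L) / (lam * s + e * L * a)) :
    (lam * S - psi) * (lam * s + e * L * a) = F := by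
  have hSD := (eq_div_iff hden).mp hS
  linear_combination lam * hSD - hF

lemma susceptible_growth_eq (hK : K ≠ 0) (hden : lam * s + e * L * a ≠ 0)
    (hE : E = r * L * K * e * a - e * L * r * s - L * K * b * lam * s
        + b * L * K * a * psi + b * L * K * a * mu - r * s * psi
        + r * K * lam * s - r * s * mu)
    (hP : P = -(L * (-(lam * s) + a * mu + a * psi)) / (lam * s + e * L * a))
    (hS : S = s * (mu + psi + e * L) / (lam * s + e * L * a)) :
    r * (1 - S / K) - b * P = E / (K * (lam * s + e * L * a)) := by
  have hPD := (eq_div_iff hden).mp hP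
  have hSD := (eq_div_iff hden).mp hS
  rw [eq_div_iff (mul_ne_zero hK hden), one_sub_div hK]
  field_simp
  linear_combination (-r) * hSD - b * K * hPD - hE

lemma susceptible_balance (hK : K ≠ 0) (hden : lam * s + e * L * a ≠ 0) (hFne : F ≠ 0)
    (hE : E = r * L * K * e * a - e * L * r * s - L * K * b * lam * s
        + b * L * K * a * psi + b * L * K * a * mu - r * s * psi
        + r * K * lam * s - r * s * mu)
    (hF : F = s * lam * e * L + s * lam * mu - psi * e * L * a)
    (hP : P = -(L * (-(lam * s) + a * mu + a * psi)) / (lam * s + e * L * a))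
    (hS : S = s * (mu + psi + e * L) / (lam * s + e * L * a))
    (hV : V = s * (mu + psi + e * L) * E / (K * (lam * s + e * L * a) * F)) :
    V * (lam * S - psi) = S * (r * (1 - S / K) - b * P) := by
  have hSD := (eq_div_iff hden).mp hS
  have hVD := (eq_div_iff (mul_ne_zero (mul_ne_zero hK hden) hFne)).mp hV
  have hcoeff := lam_mul_sub_psi_mul_den hden hF hS
  rw [susceptible_growth_eq hK hden hE hP hS, mul_div_assoc',
    eq_div_iff (mul_ne_zero hK hden)]
  refine mul_right_cancel₀ hden ?_
  linear_combination (V * K * (lam * s + e * L * a)) * hcoeff + hVD - E * hSD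

end E6

open E6 in
theorem E6_is_equilibrium_general
    (s L a r K b lam psi mu e : ℝ)
    (hL : 0 < L) (hK : 0 < K)
    (E F P₆ S₆ V₆ : ℝ)
    (hE : E = r * L * K * e * a - e * L * r * s - L * K * b * lam * s
        + b * L * K * a * psi + b * L * K * a * mu - r * s * psi
        + r * K * lam * s - r * s * mu)
    (hF : F = s * lam * e * L + s * lam * mu - psi * e * L * a)
    (hden : lam * s + e * L * a ≠ 0) (hFne : F ≠ 0)
    (hP₆ : P₆ = -(L * (-(lam * s) + a * mu + a * psi)) / (lam * s + e * L * a))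
    (hS₆ : S₆ = s * (mu + psi + e * L) / (lam * s + e * L * a))
    (hV₆ : V₆ = s * (mu + psi + e * L) * E / (K * (lam * s + e * L * a) * F)) :
    s * (1 - P₆ / L) * P₆ - a * P₆ * S₆ = 0 ∧
    r * (1 - S₆ / K) * S₆ - b * P₆ * S₆ - lam * V₆ * S₆ + psi * V₆ = 0 ∧
    lam * V₆ * S₆ - psi * V₆ - mu * V₆ - e * P₆ * V₆ = 0 := by
  refine ⟨?_, ?_, ?_⟩
  · linear_combination P₆ * predator_nullcline hL.ne' hden hP₆ hS₆
  · linear_combination -susceptible_balance hK.ne' hden hFne hE hF hP₆ hS₆ hV₆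
  · linear_combination V₆ * infected_nullcline hden hP₆ hS₆

/-- `E₆ = (P₆, S₆, V₆, 0)` is an equilibrium of the two-strain ecoepidemic competition
model, where `P₆ = -L(-λs + aμ + aψ)/(λs + eLa)`, `S₆ = s(μ+ψ+eL)/(λs + eLa)`,
`V₆ = s(μ+ψ+eL)E/(K(λs+eLa)F)` with
`E = rLKea - eLrs - LKbλs + bLKaψ + bLKaμ - rsψ + rKλs - rsμ` and
`F = sλeL + sλμ - ψeLa`. -/
theorem E6_is_equilibrium
    (s L a r K b lam psi mu e : ℝ)
    (hs : 0 < s) (hL : 0 < L) (ha : 0 < a) (hr : 0 < r) (hK : 0 < K) (hb : 0 < b)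
    (hlam : 0 < lam) (hpsi : 0 < psi) (hmu : 0 < mu) (he : 0 < e)
    (E F P₆ S₆ V₆ : ℝ)
    (hE : E = r * L * K * e * a - e * L * r * s - L * K * b * lam * s
        + b * L * K * a * psi + b * L * K * a * mu - r * s * psi
        + r * K * lam * s - r * s * mu)
    (hF : F = s * lam * e * L + s * lam * mu - psi * e * L * a)
    (hden : lam * s + e * L * a ≠ 0) (hFne : F ≠ 0)
    (hP₆ : P₆ = -(L * (-(lam * s) + a * mu + a * psi)) / (lam * s + e * L * a))
    (hS₆ : S₆ = s * (mu + psi + e * L) / (lam * s + e * L * a))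
    (hV₆ : V₆ = s * (mu + psi + e * L) * E / (K * (lam * s + e * L * a) * F)) :
    s * (1 - P₆ / L) * P₆ - a * P₆ * S₆ = 0 ∧
    r * (1 - S₆ / K) * S₆ - b * P₆ * S₆ - lam * V₆ * S₆ + psi * V₆ = 0 ∧
    lam * V₆ * S₆ - psi * V₆ - mu * V₆ - e * P₆ * V₆ = 0 :=
  E6_is_equilibrium_general s L a r K b lam psi mu e hL hK E F P₆ S₆ V₆ hE hF hden hFne hP₆ hS₆ hV₆
end

section
/- Let s, L, a, r, K, b, λ, ψ, μ, e be positive reals, set E = rLKea - eLrs - LKbλs + bLKaψ + bLKaμ - rsψ + rKλs - rsμ, F = sλeL + sλμ - ψeLa, P₆ = -L(-λs + aμ + aψ)/(λs + eLa), V₆ = s(μ + ψ + eL)E/(K(λs + eLa)F), M = s(eLr + bLKλ + rψ - rKλ + rμ)/(LK(er + bψ + bμ)), G = λs/(μ + ψ), and assume F ≠ 0. Then P₆ > 0 and V₆ > 0 hold simultaneously if and only if M < a < G. -/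
/-- Feasibility of the equilibrium `E₆`: `P₆ > 0` and `V₆ > 0` hold simultaneously
if and only if `M < a < G`, where `M = s(eLr + bLKλ + rψ - rKλ + rμ)/(LK(er+bψ+bμ))`
and `G = λs/(μ+ψ)`. -/
theorem E6_feasibility
    (s L a r K b lam psi mu e : ℝ)
    (hs : 0 < s) (hL : 0 < L) (ha : 0 < a) (hr : 0 < r) (hK : 0 < K) (hb : 0 < b)
    (hlam : 0 < lam) (hpsi : 0 < psi) (hmu : 0 < mu) (he : 0 < e)
    (E F P₆ V₆ M G : ℝ)
    (hE : E = r * L * K * e * a - e * L * r * s - L * K * b * lam * s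
        + b * L * K * a * psi + b * L * K * a * mu - r * s * psi
        + r * K * lam * s - r * s * mu)
    (hF : F = s * lam * e * L + s * lam * mu - psi * e * L * a)
    (hP₆ : P₆ = -(L * (-(lam * s) + a * mu + a * psi)) / (lam * s + e * L * a))
    (hV₆ : V₆ = s * (mu + psi + e * L) * E / (K * (lam * s + e * L * a) * F))
    (hM : M = s * (e * L * r + b * L * K * lam + r * psi - r * K * lam + r * mu)
        / (L * K * (e * r + b * psi + b * mu)))
    (hG : G = lam * s / (mu + psi))
    (hFne : F ≠ 0) :
    (0 < P₆ ∧ 0 < V₆) ↔ (M < a ∧ a < G) := by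
  have hD : 0 < lam * s + e * L * a := by positivity
  have hMden : 0 < L * K * (e * r + b * psi + b * mu) := by positivity
  have hmp : 0 < mu + psi := by positivity
  -- a < G ↔ a*(mu+psi) < lam*s
  have hGiff : a < G ↔ a * (mu + psi) < lam * s := by
    rw [hG, lt_div_iff₀ hmp]
  -- M < a ↔ E > 0
  have hMiff : M < a ↔ 0 < E := by
    rw [hM, div_lt_iff₀ hMden, hE]
    constructor <;> intro h <;> nlinarith [h]
  -- a < G → F > 0
  have hFpos : a * (mu + psi) < lam * s → 0 < F := by
    intro h
    rw [hF]
    nlinarith [mul_pos (mul_pos he hL) (mul_pos ha hmu),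
      mul_pos (mul_pos hs hlam) hmu, mul_pos he hL, mul_pos ha hpsi]
  constructor
  · rintro ⟨hP, hV⟩
    -- extract numerator positivity from P₆
    have hnum : 0 < -(L * (-(lam * s) + a * mu + a * psi)) := by
      rw [hP₆] at hP
      rcases div_pos_iff.mp hP with ⟨h1, _⟩ | ⟨_, h2⟩
      · exact h1
      · linarith
    have haG : a * (mu + psi) < lam * s := by nlinarith [hnum]
    have hF0 : 0 < F := hFpos haG
    have hEpos : 0 < E := by
      rw [hV₆] at hV
      have hden : 0 < K * (lam * s + e * L * a) * F := by positivity
      have hcoef : 0 < s * (mu + psi + e * L) := by positivity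
      rcases div_pos_iff.mp hV with ⟨h1, _⟩ | ⟨_, h2⟩
      · rcases mul_pos_iff.mp h1 with ⟨_, h⟩ | ⟨h, _⟩
        · exact h
        · linarith
      · linarith
    exact ⟨hMiff.mpr hEpos, hGiff.mpr haG⟩
  · rintro ⟨hMa, haG'⟩
    have haG : a * (mu + psi) < lam * s := hGiff.mp haG'
    have hEpos : 0 < E := hMiff.mp hMa
    have hF0 : 0 < F := hFpos haG
    constructor
    · rw [hP₆]
      apply div_pos _ hD
      have hid : a * mu + a * psi = a * (mu + psi) := by ring
      have hneg : -(lam * s) + a * mu + a * psi < 0 := by linarith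
      exact neg_pos.mpr (mul_neg_of_pos_of_neg hL hneg)
    · rw [hV₆]
      apply div_pos
      · positivity
      · positivity
end

section
/- Let s, L, a, r, K, b, β, φ, ν, f be positive reals, set Ê = rLKfa - fLrs - bLKβs + bLKaφ + bLKaν - rsφ + rKβs - rsν, F̂ = sβfL + sβν - φfLa, P₇ = -L(-βs + aν + aφ)/(βs + fLa), W₇ = s(ν + φ + fL)Ê/(K(βs + fLa)F̂), M̂ = s(fLr + bLKβ + rφ - rKβ + rν)/(LK(fr + bφ + bν)), Ĝ = βs/(ν + φ), and assume F̂ ≠ 0. Then P₇ > 0 and W₇ > 0 hold simultaneously if and only if M̂ < a < Ĝ. -/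
/-- Feasibility of the equilibrium `E₇`: `P₇ > 0` and `W₇ > 0` hold simultaneously
if and only if `M̂ < a < Ĝ`, where `M̂ = s(fLr + bLKβ + rφ - rKβ + rν)/(LK(fr+bφ+bν))`
and `Ĝ = βs/(ν+φ)`. -/
theorem E7_feasibility
    (s L a r K b beta phi nu f : ℝ)
    (hs : 0 < s) (hL : 0 < L) (ha : 0 < a) (hr : 0 < r) (hK : 0 < K) (hb : 0 < b)
    (hbeta : 0 < beta) (hphi : 0 < phi) (hnu : 0 < nu) (hf : 0 < f)
    (Ehat Fhat P₇ W₇ Mhat Ghat : ℝ)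
    (hEhat : Ehat = r * L * K * f * a - f * L * r * s - b * L * K * beta * s
        + b * L * K * a * phi + b * L * K * a * nu - r * s * phi
        + r * K * beta * s - r * s * nu)
    (hFhat : Fhat = s * beta * f * L + s * beta * nu - phi * f * L * a)
    (hP₇ : P₇ = -(L * (-(beta * s) + a * nu + a * phi)) / (beta * s + f * L * a))
    (hW₇ : W₇ = s * (nu + phi + f * L) * Ehat / (K * (beta * s + f * L * a) * Fhat))
    (hMhat : Mhat = s * (f * L * r + b * L * K * beta + r * phi - r * K * beta + r * nu)
        / (L * K * (f * r + b * phi + b * nu)))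
    (hGhat : Ghat = beta * s / (nu + phi))
    (hFne : Fhat ≠ 0) :
    (0 < P₇ ∧ 0 < W₇) ↔ (Mhat < a ∧ a < Ghat) := by
  subst hEhat hFhat hP₇ hW₇ hMhat hGhat
  have hden : 0 < beta * s + f * L * a := by positivity
  have hnp : 0 < nu + phi := by positivity
  have hLK : 0 < L * K * (f * r + b * phi + b * nu) := by positivity
  have hnfL : 0 < s * (nu + phi + f * L) := by positivity
  constructor
  · rintro ⟨hP, hW⟩
    have hnum : 0 * (beta * s + f * L * a) < -(L * (-(beta * s) + a * nu + a * phi)) :=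
      (lt_div_iff₀ hden).mp hP
    have haG : a * (nu + phi) < beta * s := by nlinarith
    have hF : 0 < s * beta * f * L + s * beta * nu - phi * f * L * a := by
      have h1 : phi * a < beta * s := by nlinarith
      nlinarith [mul_pos (mul_pos hf hL) (sub_pos.mpr h1), mul_pos (mul_pos hs hbeta) hnu]
    have hdW : 0 < K * (beta * s + f * L * a) *
        (s * beta * f * L + s * beta * nu - phi * f * L * a) :=
      mul_pos (mul_pos hK hden) hF
    have hE : 0 < r * L * K * f * a - f * L * r * s - b * L * K * beta * s
        + b * L * K * a * phi + b * L * K * a * nu - r * s * phi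
        + r * K * beta * s - r * s * nu := by
      have h2 := (lt_div_iff₀ hdW).mp hW
      by_contra h; push_neg at h
      nlinarith [mul_nonpos_of_nonneg_of_nonpos (le_of_lt hnfL) h]
    constructor
    · rw [div_lt_iff₀ hLK]; nlinarith
    · rw [lt_div_iff₀ hnp]; linarith
  · rintro ⟨hM, hG⟩
    have haG : a * (nu + phi) < beta * s := (lt_div_iff₀ hnp).mp hG
    have hE : 0 < r * L * K * f * a - f * L * r * s - b * L * K * beta * s
        + b * L * K * a * phi + b * L * K * a * nu - r * s * phi
        + r * K * beta * s - r * s * nu := by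
      have := (div_lt_iff₀ hLK).mp hM
      nlinarith
    have hF : 0 < s * beta * f * L + s * beta * nu - phi * f * L * a := by
      have h1 : phi * a < beta * s := by nlinarith
      nlinarith [mul_pos (mul_pos hf hL) (sub_pos.mpr h1), mul_pos (mul_pos hs hbeta) hnu]
    constructor
    · rw [lt_div_iff₀ hden]
      have hh := mul_pos hL (sub_pos.mpr haG)
      have heq : -(L * (-(beta * s) + a * nu + a * phi))
          = L * (beta * s - a * (nu + phi)) := by ring
      rw [heq, zero_mul]
      exact hh
    · exact div_pos (mul_pos hnfL hE) (mul_pos (mul_pos hK hden) hF)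
end
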